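/- Let the machine M be FTA-compliant with the election architectural specification (EE, C_EE), i.e., FTA-compliant with (EE, ℐ) for some interpretation ℐ ∈ C_EE. Then for every voter v, every voter permutation P with P(v) = v, and every sequence α ∈ A*, we have view_v(α) = view_v(P(α)), i.e., α ≈_v P(α). -/

import Mathlib

structure Machine (S A D O : Type) where
  s0 : S
  step : S → A → S
  dom : A → D
  obs : D → S → O

namespace Machine

def run {S A D O : Type} (M : Machine S A D O) (α : List A) : S :=
  α.foldl M.step M.s0

end Machine
/-- Elements of a view: actions or (group) observations. -/
inductive VE (A O' : Type) where
  | act : A → VE A O'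
  | obs : O' → VE A O'

open Classical in
/-- Absorptive concatenation: `σ ∘ x` is `σ` if `x` equals the last element of `σ`,
and `σ ++ [x]` otherwise. -/
noncomputable def absorb {X : Type} (σ : List X) (x : X) : List X :=
  if σ.getLast? = some x then σ else σ ++ [x]

open Classical in
/-- View of a group `G`, computed on the reversed action sequence. -/
noncomputable def viewR {S A D O : Type} (M : Machine S A D O) (G : Set D) :
    List A → List (VE A (G → O))
  | [] => [VE.obs (fun u : G => M.obs u.1 M.s0)]
  | a :: ρ =>
    let o : VE A (G → O) := VE.obs (fun u : G => M.obs u.1 (M.run ((a :: ρ).reverse)))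
    if M.dom a ∈ G then viewR M G ρ ++ [VE.act a, o] else absorb (viewR M G ρ) o

/-- The view of group `G` of the action sequence `α`. -/
noncomputable def view {S A D O : Type} (M : Machine S A D O) (G : Set D) (α : List A) :
    List (VE A (G → O)) :=
  viewR M G α.reverse
/-- An extended architecture: `edge u v = none` means no edge, `edge u v = some none`
means an edge labelled `⊤`, and `edge u v = some (some f)` means an edge labelled by
the filter-function name `f`.  There is at most one label per ordered pair by
construction, and the relation is reflexive with label `⊤`. -/
structure ExtArch (D L : Type) where
  edge : D → D → Option (Option L)
  refl : ∀ u, edge u u = some none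

/-- Values of the `tf` function and of filter-function interpretations:
`eps` is the empty value ε, `base v` an arbitrary basic value, and
`pair σ a` the pair `(σ, a)` of a `tf` value and an action. -/
inductive TFVal (A V : Type) where
  | eps : TFVal A V
  | base : V → TFVal A V
  | pair : List (TFVal A V) → A → TFVal A V

/-- `σ ⌢ x`: appends `x` as a single new last element unless `x = ε`. -/
def snoc' {A V : Type} (σ : List (TFVal A V)) : TFVal A V → List (TFVal A V)
  | .eps => σ
  | x => σ ++ [x]

/-- `tf`, computed on the reversed action sequence. -/
def tfR {A D L V : Type} (Arch : ExtArch D L) (dm : A → D)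
    (I : L → List A → A → TFVal A V) : List A → D → List (TFVal A V)
  | [], _ => []
  | a :: ρ, u =>
    match Arch.edge (dm a) u with
    | none => tfR Arch dm I ρ u
    | some none => tfR Arch dm I ρ u ++ [TFVal.pair (tfR Arch dm I ρ (dm a)) a]
    | some (some f) => snoc' (tfR Arch dm I ρ u) (I f ρ.reverse a)

/-- `tf Arch dm I α u` : maximal information domain `u` is permitted to have after `α`. -/
def tf {A D L V : Type} (Arch : ExtArch D L) (dm : A → D)
    (I : L → List A → A → TFVal A V) (α : List A) (u : D) : List (TFVal A V) :=
  tfR Arch dm I α.reverse u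

/-- `inF Arch dm I α a u` : the information `in_{dom(a),u}(α, a)` transmitted to `u`
when action `a` is performed after `α`. -/
def inF {A D L V : Type} (Arch : ExtArch D L) (dm : A → D)
    (I : L → List A → A → TFVal A V) (α : List A) (a : A) (u : D) : TFVal A V :=
  match Arch.edge (dm a) u with
  | none => TFVal.eps
  | some none => TFVal.pair (tf Arch dm I α (dm a)) a
  | some (some f) => I f α a
/-- FTA-compliance of a machine with an interpreted extended architecture
(whose actions, domains and domain function are those of the machine). -/
def FTACompliant {S A D O L V : Type} (M : Machine S A D O) (Arch : ExtArch D L)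
    (I : L → List A → A → TFVal A V) : Prop :=
  ∀ (u : D) (α α' : List A), tf Arch M.dom I α u = tf Arch M.dom I α' u →
    M.obs u (M.run α) = M.obs u (M.run α')
/-- Domains of the election architecture: the voters and the election
authority. -/
inductive EEDom (Vt : Type) where
  | voter : Vt → EEDom Vt
  | auth : EEDom Vt

open Classical in
/-- The election extended architecture: reflexive `⊤`-edges, `v ↝_⊤ ElecAuth`
for each voter `v`, and `ElecAuth ↝_results v` for each voter `v` (the label
set is `Unit`, with `()` standing for `results`). -/
noncomputable def EEArch (Vt : Type) : ExtArch (EEDom Vt) Unit where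
  edge u v :=
    match u, v with
    | .voter a, .voter b => if a = b then some none else none
    | .voter _, .auth => some none
    | .auth, .voter _ => some (some ())
    | .auth, .auth => some none
  refl u := by cases u <;> simp

open Classical in
/-- The action of a voter permutation `P` on a single action: an action of the
form `act t v` (type `t` performed by voter `v`) is mapped to `act t (P v)`;
all other actions are fixed. -/
noncomputable def permA {Vt AV A : Type} (act : AV → Vt → A) (P : Equiv.Perm Vt)
    (a : A) : A :=
  if h : ∃ v : Vt, ∃ t : AV, act t v = a then
    act h.choose_spec.choose (P h.choose)
  else a

/-- The action of a voter permutation on a sequence of actions. -/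
noncomputable def permSeq {Vt AV A : Type} (act : AV → Vt → A) (P : Equiv.Perm Vt)
    (α : List A) : List A :=
  α.map (permA act P)

/-!
A voter `v` may observe only what `tf` allows it: its own actions (with its own earlier `tf`)
and the election authority's `results`. A permutation fixing `v` leaves `v`'s own actions
untouched, sends other voters' actions to other voters (which `v` never hears from directly),
and by identity-obliviousness does not change any `results` value. Hence `tf_v` is invariant,
so by FTA-compliance every observation of `v` is, and the view, being built from `v`'s actions
and observations only, is invariant too.
-/

section View

variable {S A D O : Type} (M : Machine S A D O) (G : Set D)

open Classical in
lemma view_append_singleton (α : List A) (a : A) :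
    view M G (α ++ [a]) =
      if M.dom a ∈ G then
        view M G α ++ [VE.act a, VE.obs fun u : G => M.obs u.1 (M.run (α ++ [a]))]
      else absorb (view M G α) (VE.obs fun u : G => M.obs u.1 (M.run (α ++ [a]))) := by
  rw [view, view, List.reverse_concat, viewR, List.reverse_cons, List.reverse_reverse]

lemma view_map_eq {f : A → A} (hfix : ∀ a, M.dom a ∈ G → f a = a)
    (hmem : ∀ a, M.dom (f a) ∈ G → M.dom a ∈ G)
    (hobs : ∀ α, ∀ u ∈ G, M.obs u (M.run (α.map f)) = M.obs u (M.run α)) (α : List A) :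
    view M G (α.map f) = view M G α := by
  induction α using List.reverseRecOn with
  | nil => rfl
  | append_singleton α a ih =>
    have hmem_iff : M.dom (f a) ∈ G ↔ M.dom a ∈ G := ⟨hmem a, fun h => (hfix a h).symm ▸ h⟩
    have hobs_last : (fun u : G => M.obs u.1 (M.run ((α ++ [a]).map f))) =
        fun u : G => M.obs u.1 (M.run (α ++ [a])) := funext fun u => hobs _ u.1 u.2
    rw [List.map_append, List.map_singleton, view_append_singleton, view_append_singleton, ih,
      ← List.map_singleton (f := f), ← List.map_append, hobs_last]
    by_cases ha : M.dom a ∈ G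
    · rw [if_pos (hmem_iff.mpr ha), if_pos ha, hfix a ha]
    · rw [if_neg (mt hmem_iff.mp ha), if_neg ha]

end View

lemma tf_append_singleton {A D L V : Type} (Arch : ExtArch D L) (dm : A → D)
    (I : L → List A → A → TFVal A V) (α : List A) (a : A) (u : D) :
    tf Arch dm I (α ++ [a]) u = snoc' (tf Arch dm I α u) (inF Arch dm I α a u) := by
  rw [tf, tf, List.reverse_concat, tfR, inF, List.reverse_reverse]
  split <;> rfl

section Election

variable {S A O V Vt AV : Type} {M : Machine S A (EEDom Vt) O} {act : AV → Vt → A}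
  {P : Equiv.Perm Vt} {v : Vt} {a : A}

lemma permA_act (hinj : ∀ (t t' : AV) (v v' : Vt), act t v = act t' v' → t = t' ∧ v = v')
    (t : AV) (w : Vt) : permA act P (act t w) = act t (P w) := by
  have h : ∃ v : Vt, ∃ t' : AV, act t' v = act t w := ⟨w, t, rfl⟩
  obtain ⟨ht, hv⟩ := hinj _ _ _ _ h.choose_spec.choose_spec
  rw [permA, dif_pos h, ht, hv]

lemma permA_of_dom_eq_auth (hdom : ∀ (t : AV) (v : Vt), M.dom (act t v) = EEDom.voter v)
    (h : M.dom a = EEDom.auth) : permA act P a = a := by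
  have hnot : ¬ ∃ v : Vt, ∃ t : AV, act t v = a := by
    rintro ⟨w, t, rfl⟩
    simp [hdom] at h
  rw [permA, dif_neg hnot]

lemma permA_of_dom_eq_voter
    (hsurj : ∀ (a : A) (v : Vt), M.dom a = EEDom.voter v → ∃ t : AV, act t v = a)
    (hinj : ∀ (t t' : AV) (v v' : Vt), act t v = act t' v' → t = t' ∧ v = v')
    (hPv : P v = v) (h : M.dom a = EEDom.voter v) : permA act P a = a := by
  obtain ⟨t, rfl⟩ := hsurj a v h
  rw [permA_act hinj, hPv]

lemma dom_eq_voter_of_dom_permA (hdom : ∀ (t : AV) (v : Vt), M.dom (act t v) = EEDom.voter v)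
    (hsurj : ∀ (a : A) (v : Vt), M.dom a = EEDom.voter v → ∃ t : AV, act t v = a)
    (hinj : ∀ (t t' : AV) (v v' : Vt), act t v = act t' v' → t = t' ∧ v = v')
    (hPv : P v = v) (h : M.dom (permA act P a) = EEDom.voter v) : M.dom a = EEDom.voter v := by
  cases hda : M.dom a with
  | voter w =>
    obtain ⟨t, rfl⟩ := hsurj a w hda
    rw [permA_act hinj, hdom, EEDom.voter.injEq, ← hPv] at h
    rw [P.injective h]
  | auth => rwa [permA_of_dom_eq_auth hdom hda, hda] at h

lemma inF_permSeq_voter (hdom : ∀ (t : AV) (v : Vt), M.dom (act t v) = EEDom.voter v)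
    (hsurj : ∀ (a : A) (v : Vt), M.dom a = EEDom.voter v → ∃ t : AV, act t v = a)
    (hinj : ∀ (t t' : AV) (v v' : Vt), act t v = act t' v' → t = t' ∧ v = v')
    (I : Unit → List A → A → TFVal A V)
    (hA1 : ∀ (α : List A) (a : A), M.dom a = EEDom.auth →
      I () α a = I () (permSeq act P α) a)
    (hPv : P v = v) (α : List A)
    (htf : tf (EEArch Vt) M.dom I (permSeq act P α) (.voter v) =
      tf (EEArch Vt) M.dom I α (.voter v)) :
    inF (EEArch Vt) M.dom I (permSeq act P α) (permA act P a) (.voter v) =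
      inF (EEArch Vt) M.dom I α a (.voter v) := by
  by_cases hv : M.dom a = .voter v
  · simp only [inF, permA_of_dom_eq_voter hsurj hinj hPv hv, hv, (EEArch Vt).refl, htf]
  cases hda : M.dom a with
  | voter w =>
    have hwv : w ≠ v := fun h => hv (h ▸ hda)
    have hPwv : P w ≠ v := hPv ▸ P.injective.ne hwv
    obtain ⟨t, rfl⟩ := hsurj a w hda
    simp only [inF, permA_act hinj, hdom, EEArch, if_neg hwv, if_neg hPwv]
  | auth =>
    simp only [inF, permA_of_dom_eq_auth hdom hda, hda]
    exact (hA1 α a hda).symm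

lemma tf_permSeq_voter (hdom : ∀ (t : AV) (v : Vt), M.dom (act t v) = EEDom.voter v)
    (hsurj : ∀ (a : A) (v : Vt), M.dom a = EEDom.voter v → ∃ t : AV, act t v = a)
    (hinj : ∀ (t t' : AV) (v v' : Vt), act t v = act t' v' → t = t' ∧ v = v')
    (I : Unit → List A → A → TFVal A V)
    (hA1 : ∀ (α : List A) (a : A), M.dom a = EEDom.auth →
      I () α a = I () (permSeq act P α) a)
    (hPv : P v = v) (α : List A) :
    tf (EEArch Vt) M.dom I (permSeq act P α) (.voter v) =
      tf (EEArch Vt) M.dom I α (.voter v) := by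
  induction α using List.reverseRecOn with
  | nil => rfl
  | append_singleton α a ih =>
    rw [permSeq, List.map_append, List.map_singleton, ← permSeq, tf_append_singleton,
      tf_append_singleton, ih, inF_permSeq_voter hdom hsurj hinj I hA1 hPv α ih]

end Election

/-- if `M` is FTA-compliant with `(EE, C_EE)` (the interpretation
being voter-homogeneous, as witnessed by `act`, and identity-oblivious, A1),
then for every voter `v`, every voter permutation `P` fixing `v` and every
sequence `α`, we have `α ≈_v P(α)`. -/
theorem statement12 {S A O V Vt AV : Type} (M : Machine S A (EEDom Vt) O)
    (act : AV → Vt → A)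
    (hdom : ∀ (t : AV) (v : Vt), M.dom (act t v) = EEDom.voter v)
    (hsurj : ∀ (a : A) (v : Vt), M.dom a = EEDom.voter v → ∃ t : AV, act t v = a)
    (hinj : ∀ (t t' : AV) (v v' : Vt), act t v = act t' v' → t = t' ∧ v = v')
    (I : Unit → List A → A → TFVal A V)
    (hA1 : ∀ (P : Equiv.Perm Vt) (α : List A) (a : A), M.dom a = EEDom.auth →
      I () α a = I () (permSeq act P α) a)
    (hFTA : FTACompliant M (EEArch Vt) I) :
    ∀ (v : Vt) (P : Equiv.Perm Vt), P v = v → ∀ α : List A,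
      view M {EEDom.voter v} α = view M {EEDom.voter v} (permSeq act P α) := by
  intro v P hPv α
  refine (view_map_eq M _ (fun a ha => ?_) (fun a ha => ?_) (fun β u hu => ?_) α).symm
  · exact permA_of_dom_eq_voter hsurj hinj hPv ha
  · exact dom_eq_voter_of_dom_permA hdom hsurj hinj hPv ha
  · rw [Set.mem_singleton_iff.mp hu]
    exact hFTA _ _ _ (tf_permSeq_voter hdom hsurj hinj I (hA1 P) hPv β)
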